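/- Let P be an S-Motzkin path and define a horizontal step h_i of P to be 'paired' if either it is the first horizontal step of P, or there exists a later horizontal step at the same height with all intermediate steps at or above that height. Then the factor of P beginning at a paired horizontal step h_i and ending just before its matching horizontal step (or at the end of P) is itself an S-Motzkin path when shifted to height 0. -/

import Mathlib

inductive Step : Type
  | u : Step
  | d : Step
  | h : Step
deriving DecidableEq, Repr

def stepVal : Step → ℤ
  | Step.u => 1
  | Step.d => -1
  | Step.h => 0

/-- Sum of step values (final height) of a word. -/
def hsum (w : List Step) : ℤ := (w.map stepVal).sum

/-- All prefixes have nonnegative height. -/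
def NonnegPrefixes (w : List Step) : Prop := ∀ p : List Step, p <+: w → 0 ≤ hsum p

/-- A Motzkin path: nonnegative prefix heights and total height 0. -/
def IsMotzkin (w : List Step) : Prop := NonnegPrefixes w ∧ hsum w = 0

/-- The word (hu)^n. -/
def huWord (n : ℕ) : List Step := (List.replicate n [Step.h, Step.u]).flatten

/-- An S-Motzkin path with n up, n down, n horizontal steps:
a Motzkin path whose subword of non-down steps is (hu)^n. -/
def IsSMotzkin (n : ℕ) (w : List Step) : Prop :=
  IsMotzkin w ∧ w.count Step.u = n ∧ w.count Step.d = n ∧ w.count Step.h = n ∧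
    w.filter (fun s => s ≠ Step.d) = huWord n

/-- A nonempty word over {h, u}. -/
def HUBlock (A : List Step) : Prop := A ≠ [] ∧ ∀ s ∈ A, s = Step.h ∨ s = Step.u

/-- Glue blocks A_i with runs of d_i down steps: A_0 d^{d_1} A_1 d^{d_2} ... -/
def joinAM (As : List (List Step)) (ds : List ℕ) : List Step :=
  (List.zipWith (fun A k => A ++ List.replicate k Step.d) As ds).flatten

/-- w decomposes as A_0 D_1 A_1 D_2 ... A_{t-1} D_t with A_i nonempty over {h,u}
and D_i nonempty runs of down steps. -/
def AMDecomp (w : List Step) (As : List (List Step)) (ds : List ℕ) : Prop :=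
  As.length = ds.length ∧ (∀ A ∈ As, HUBlock A) ∧ (∀ k ∈ ds, 0 < k) ∧ w = joinAM As ds

/-- An Asinowski–Mansour path with n up, n down, n horizontal steps. -/
def IsAM (n : ℕ) (w : List Step) : Prop :=
  IsMotzkin w ∧ w.count Step.u = n ∧ w.count Step.d = n ∧ w.count Step.h = n ∧
    ∃ As ds, AMDecomp w As ds

/-- A Dyck path with n up and n down steps, encoded over the alphabet Step. -/
def IsDyck (n : ℕ) (w : List Step) : Prop :=
  (∀ s ∈ w, s = Step.u ∨ s = Step.d) ∧ w.count Step.u = n ∧ w.count Step.d = n ∧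
    NonnegPrefixes w

/-- Height of the path at the start of step i. -/
def heightAt (w : List Step) (i : ℕ) : ℤ := hsum (w.take i)

/-- Two horizontal steps at positions i < j, at the same height, with all steps
strictly between them at or above that height. -/
def Matched (w : List Step) (i j : ℕ) : Prop :=
  i < j ∧ w[i]? = some Step.h ∧ w[j]? = some Step.h ∧
    heightAt w i = heightAt w j ∧ ∀ k, i < k → k < j → heightAt w i ≤ heightAt w k

/-- Positions of the horizontal steps of w, from left to right. -/
def hPositions (w : List Step) : List ℕ := List.findIdxs (fun s => s = Step.h) w

/-- Lexicographic (weak) order on lists of naturals. -/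
def LexLe (l l' : List ℕ) : Prop := l = l' ∨ List.Lex (· < ·) l l'

/-- w is an S-Motzkin word obtained by inserting horizontal steps into D. -/
def ValidIns (D w : List Step) : Prop :=
  (∃ m, IsSMotzkin m w) ∧ w.filter (fun s => s ≠ Step.h) = D

/-- w is the greedy h-insertion into D: each h leftmost, i.e. the list of positions
of the h's is lexicographically minimal among all valid insertions. -/
def GreedyFor (D w : List Step) : Prop :=
  ValidIns D w ∧ ∀ w', ValidIns D w' → LexLe (hPositions w) (hPositions w')

/-
The factor `Q` of `P` from a horizontal step to its matching one starts and ends at the same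
height and never goes below it, so it is a Motzkin path. Deleting the down steps of `P` leaves
`(hu)^n`, and `Q` begins at one `h` and stops just before another, so its non-down subword is a
stretch of `(hu)^n` running from an `h` up to the next occurrence of `h`, i.e. some `(hu)^m`.
A Motzkin path with non-down subword `(hu)^m` has `m` up steps, hence also `m` down steps.
-/

lemma hsum_append (a b : List Step) : hsum (a ++ b) = hsum a + hsum b := by
  simp [hsum]

lemma hsum_eq_count_u_sub_count_d (w : List Step) :
    hsum w = (w.count Step.u : ℤ) - w.count Step.d := by
  induction w with
  | nil => simp [hsum]
  | cons s t ih => cases s <;> simp [hsum, stepVal] at * <;> omega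

lemma nonnegPrefixes_of_forall_take {w : List Step} (h : ∀ k, 0 ≤ hsum (w.take k)) :
    NonnegPrefixes w := fun p hp => by
  rw [List.prefix_iff_eq_take.mp hp]
  exact h _

lemma huWord_succ (n : ℕ) : huWord (n + 1) = Step.h :: Step.u :: huWord n := by
  simp [huWord, List.replicate_succ]

lemma huWord_add (a b : ℕ) : huWord (a + b) = huWord a ++ huWord b := by
  induction a with
  | zero => simp [huWord]
  | succ a ih => rw [Nat.succ_add, huWord_succ, huWord_succ, ih]; rfl

lemma length_huWord (n : ℕ) : (huWord n).length = 2 * n := by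
  induction n with
  | zero => rfl
  | succ n ih => rw [huWord_succ]; simp [ih]; omega

lemma count_u_huWord (n : ℕ) : (huWord n).count Step.u = n := by
  induction n with
  | zero => rfl
  | succ n ih => simp [huWord_succ, ih]

lemma count_h_huWord (n : ℕ) : (huWord n).count Step.h = n := by
  induction n with
  | zero => rfl
  | succ n ih => simp [huWord_succ, ih]

lemma exists_eq_huWord_of_append_h_cons_eq {n : ℕ} {F R : List Step}
    (hF : F ++ Step.h :: R = huWord n) : ∃ a, F = huWord a := by
  induction n generalizing F with
  | zero => simp [huWord] at hF
  | succ n ih =>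
    rw [huWord_succ] at hF
    match F, hF with
    | [], _ => exact ⟨0, rfl⟩
    | [_], hF => simp at hF
    | x :: y :: F', hF =>
      simp only [List.cons_append, List.cons.injEq] at hF
      obtain ⟨rfl, rfl, hF'⟩ := hF
      obtain ⟨a, rfl⟩ := ih hF'
      exact ⟨a + 1, (huWord_succ a).symm⟩

lemma eq_huWord_sub_of_huWord_append_eq {a b : ℕ} {G : List Step}
    (hG : huWord a ++ G = huWord b) : G = huWord (b - a) := by
  have hab : a ≤ b := by
    have := congrArg List.length hG
    simp only [List.length_append, length_huWord] at this
    omega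
  obtain ⟨c, rfl⟩ := Nat.exists_eq_add_of_le hab
  rw [huWord_add] at hG
  rw [Nat.add_sub_cancel_left]
  exact List.append_cancel_left hG

lemma exists_eq_huWord_of_append_h_cons_append_h_cons_eq {n : ℕ} {F G R : List Step}
    (hw : F ++ Step.h :: G ++ Step.h :: R = huWord n) : ∃ m, Step.h :: G = huWord m := by
  obtain ⟨b, hb⟩ := exists_eq_huWord_of_append_h_cons_eq hw
  obtain ⟨a, rfl⟩ := exists_eq_huWord_of_append_h_cons_eq (F := F) (R := G ++ Step.h :: R)
    (by rw [← hw]; simp)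
  exact ⟨b - a, eq_huWord_sub_of_huWord_append_eq hb⟩

lemma isSMotzkin_of_isMotzkin_of_filter_eq_huWord {m : ℕ} {w : List Step} (hw : IsMotzkin w)
    (hfilter : w.filter (fun s => s ≠ Step.d) = huWord m) : IsSMotzkin m w := by
  have count_eq (s : Step) (hs : s ≠ Step.d) : w.count s = (huWord m).count s := by
    rw [← hfilter, List.count_filter (by simpa using hs)]
  have hu : w.count Step.u = m := by rw [count_eq _ (by decide), count_u_huWord]
  have hd : w.count Step.d = m := by
    have := hsum_eq_count_u_sub_count_d w
    rw [hw.2, hu] at this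
    omega
  exact ⟨hw, hu, hd, by rw [count_eq _ (by decide), count_h_huWord], hfilter⟩

lemma heightAt_add (w : List Step) (i k : ℕ) :
    heightAt w (i + k) = heightAt w i + hsum ((w.drop i).take k) := by
  rw [heightAt, heightAt, List.take_add, hsum_append]

namespace Matched

variable {w : List Step} {i j : ℕ}

lemma heightAt_le (hm : Matched w i j) {k : ℕ} (hik : i ≤ k) (hkj : k ≤ j) :
    heightAt w i ≤ heightAt w k := by
  obtain ⟨-, -, -, hij, hbetween⟩ := hm
  rcases hik.eq_or_lt with rfl | hik
  · rfl
  rcases hkj.eq_or_lt with rfl | hkj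
  · exact hij.le
  · exact hbetween k hik hkj

lemma isMotzkin_factor (hm : Matched w i j) : IsMotzkin ((w.drop i).take (j - i)) := by
  have hij : i ≤ j := hm.1.le
  refine ⟨nonnegPrefixes_of_forall_take fun k => ?_, ?_⟩
  · rw [List.take_take]
    have := heightAt_add w i (min k (j - i))
    have := hm.heightAt_le (k := i + min k (j - i)) (by omega) (by omega)
    linarith
  · have := heightAt_add w i (j - i)
    rw [Nat.add_sub_cancel' hij, ← hm.2.2.2.1] at this
    linarith

lemma exists_eq_append_factor (hm : Matched w i j) : ∃ G R,
    (w.drop i).take (j - i) = Step.h :: G ∧ w = w.take i ++ Step.h :: G ++ Step.h :: R := by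
  obtain ⟨hij, hi, hj, -⟩ := hm
  obtain ⟨hjlen, hj⟩ := List.getElem?_eq_some_iff.mp hj
  obtain ⟨hilen, hi⟩ := List.getElem?_eq_some_iff.mp hi
  have hfactor : (w.drop i).take (j - i) = Step.h :: (w.drop (i + 1)).take (j - (i + 1)) := by
    rw [List.drop_eq_getElem_cons hilen, hi, show j - i = j - (i + 1) + 1 by omega,
      List.take_succ_cons]
  refine ⟨_, w.drop (j + 1), hfactor, ?_⟩
  rw [← hfactor, ← hj, ← List.drop_eq_getElem_cons hjlen, ← List.take_add,
    Nat.add_sub_cancel' hij.le, List.take_append_drop]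

lemma exists_filter_factor_eq_huWord {n : ℕ} (hm : Matched w i j)
    (hw : w.filter (fun s => s ≠ Step.d) = huWord n) :
    ∃ m, ((w.drop i).take (j - i)).filter (fun s => s ≠ Step.d) = huWord m := by
  obtain ⟨G, R, hfactor, hdecomp⟩ := hm.exists_eq_append_factor
  rw [hdecomp] at hw
  simp only [List.filter_append, List.filter_cons, ne_eq, reduceCtorEq, not_false_eq_true,
    decide_true, if_true] at hw
  rw [hfactor, List.filter_cons_of_pos (by decide)]
  exact exists_eq_huWord_of_append_h_cons_append_h_cons_eq hw

end Matched

/-- if h_i is a paired horizontal step of an S-Motzkin path P with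
matching horizontal step h_j (same height, intermediate steps at or above), then the
factor of P from position i up to (but excluding) position j, shifted to height 0,
is itself an S-Motzkin path. -/
theorem paired_factor_smotzkin (n : ℕ) (P : List Step) (i j : ℕ)
    (hP : IsSMotzkin n P) (hm : Matched P i j) :
    ∃ m, IsSMotzkin m ((P.drop i).take (j - i)) := by
  obtain ⟨-, -, -, -, hPfilter⟩ := hP
  obtain ⟨m, hfilter⟩ := hm.exists_filter_factor_eq_huWord hPfilter
  exact ⟨m, isSMotzkin_of_isMotzkin_of_filter_eq_huWord hm.isMotzkin_factor hfilter⟩
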